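/- A graph G satisfies core(G) = nucleus(G) if and only if core(G[L^c(G)]) = ∅ and corona(G) ∩ ∂_L(G) = ∅. -/

import Mathlib

open Finset

variable {V : Type*} [Fintype V] [DecidableEq V] (G : SimpleGraph V) [DecidableRel G.Adj]

/-- `N(S)`: the set of vertices adjacent to some vertex of `S`. -/
def nbhd (S : Finset V) : Finset V := S.biUnion (fun v => G.neighborFinset v)

/-- `S` is an independent set of `G`. -/
def Indep (S : Finset V) : Prop := ∀ u ∈ S, ∀ v ∈ S, ¬ G.Adj u v

/-- The difference `d_G(S) = |S| - |N(S)|`. -/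
def diffI (S : Finset V) : ℤ := (S.card : ℤ) - ((nbhd G S).card : ℤ)

/-- `S` is a maximum independent set of `G`. -/
def IsMaxIndep (S : Finset V) : Prop :=
  Indep G S ∧ ∀ T : Finset V, Indep G T → T.card ≤ S.card

/-- `I` is a critical independent set of `G`. -/
def IsCritIndep (I : Finset V) : Prop :=
  Indep G I ∧ ∀ J : Finset V, Indep G J → diffI G J ≤ diffI G I

/-- `I` is a maximum critical independent set of `G`. -/
def IsMaxCritIndep (I : Finset V) : Prop :=
  IsCritIndep G I ∧ ∀ J : Finset V, IsCritIndep G J → J.card ≤ I.card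

/-- `core(G)`: intersection of all maximum independent sets. -/
def core : Set V := {v | ∀ S : Finset V, IsMaxIndep G S → v ∈ S}

/-- `corona(G)`: union of all maximum independent sets. -/
def corona : Set V := {v | ∃ S : Finset V, IsMaxIndep G S ∧ v ∈ S}

/-- `nucleus(G)`: intersection of all maximum critical independent sets. -/
def nucleus : Set V := {v | ∀ S : Finset V, IsMaxCritIndep G S → v ∈ S}

/-- `diadem(G)`: union of all maximum critical independent sets. -/
def diadem : Set V := {v | ∃ S : Finset V, IsMaxCritIndep G S ∧ v ∈ S}

/-- `ker(G)`: intersection of all critical independent sets. -/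
def kerS : Set V := {v | ∀ S : Finset V, IsCritIndep G S → v ∈ S}

/-- A matching of `G`, given as an involution of the vertex set:
unmatched vertices are fixed points, matched vertices are sent to their partner. -/
def IsMatching (M : V → V) : Prop :=
  Function.Involutive M ∧ ∀ v, M v ≠ v → G.Adj v (M v)

/-- Twice the number of edges of the matching `M`, i.e. the number of matched vertices. -/
def matchSize (M : V → V) : ℕ := (univ.filter fun v => M v ≠ v).card

/-- `M` is a maximum matching of `G`. -/
def IsMaxMatching (M : V → V) : Prop :=
  IsMatching G M ∧ ∀ M' : V → V, IsMatching G M' → matchSize M' ≤ matchSize M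

/-- `M` is a matching of the induced subgraph `G[L]`. -/
def IsMatchingOn (L : Finset V) (M : V → V) : Prop :=
  IsMatching G M ∧ ∀ v, M v ≠ v → v ∈ L

/-- `M` is a maximum matching of the induced subgraph `G[L]`. -/
def IsMaxMatchingOn (L : Finset V) (M : V → V) : Prop :=
  IsMatchingOn G L M ∧ ∀ M' : V → V, IsMatchingOn G L M' → matchSize M' ≤ matchSize M

/-- `S` is a maximum independent set of the induced subgraph `G[L]`. -/
def IsMaxIndepOn (L : Finset V) (S : Finset V) : Prop :=
  S ⊆ L ∧ Indep G S ∧ ∀ T : Finset V, T ⊆ L → Indep G T → T.card ≤ S.card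

/-- `core` of the induced subgraph `G[L]`. -/
def coreOn (L : Finset V) : Set V := {v | ∀ S : Finset V, IsMaxIndepOn G L S → v ∈ S}

/-- `D(G[L])`: vertices of `L` missed by some maximum matching of `G[L]`. -/
def Dset (L : Finset V) : Set V := {v | v ∈ L ∧ ∃ M : V → V, IsMaxMatchingOn G L M ∧ M v = v}

/-- The Larson boundary `∂_L(G)` of the set `L`. -/
def boundaryL (L : Finset V) : Set V := {v | v ∈ L ∧ ∃ w, w ∉ L ∧ G.Adj v w}

/-- The critical difference `d(G)`. -/
noncomputable def critDiff : ℤ := sSup {d : ℤ | ∃ X : Finset V, diffI G X = d}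

/-- The difference of `S` computed in the induced subgraph `G[L]`. -/
def diffOn (L : Finset V) (S : Finset V) : ℤ := (S.card : ℤ) - ((nbhd G S ∩ L).card : ℤ)

/-- The critical difference of the induced subgraph `G[L]`. -/
noncomputable def critDiffOn (L : Finset V) : ℤ := sSup {d : ℤ | ∃ X : Finset V, X ⊆ L ∧ diffOn G L X = d}

/-- `G` is a König–Egerváry graph: `α(G) + μ(G) = |V(G)|`. -/
def KonigEgervary : Prop :=
  ∃ (S : Finset V) (M : V → V), IsMaxIndep G S ∧ IsMaxMatching G M ∧
    2 * S.card + matchSize M = 2 * Fintype.card V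

/-!
Let `I` be a maximum critical independent set and `L = I ∪ N(I)`. By Hall's theorem the
criticality of `I` yields a matching of `N(I)` into `I`; hence `α(G[L]) = |I|` and `I` remains
critical inside `G[L]`. From this, every critical independent `J` satisfies `J ∪ N(J) ⊆ L`, the
maximum critical independent sets are exactly the independent `J ⊆ L` with `|J| = |I|` and
`N(J) ⊆ L`, and the maximum independent sets of `G` are glued from maximum independent sets of
`G[L]` and of `G[Lᶜ]`: `S ∩ L` and `S \ L` are maximum there for every maximum independent `S`,
and `J ∪ B` is maximum independent whenever `J` is maximum critical and `B` is maximum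
independent in `G[Lᶜ]`.

Consequently `core ∩ Lᶜ = core(G[Lᶜ])` while `nucleus ⊆ L`, and `core ∩ L ⊆ nucleus` always.
The remaining inclusion `nucleus ⊆ core` holds when no maximum independent `S` meets `∂_L`,
since then `S ∩ L` is maximum critical; it fails otherwise, since the matching partner of a
vertex of `S ∩ ∂_L` lies in `nucleus` but not in `S`.
-/

section

variable {G}

theorem mem_nbhd {S : Finset V} {v : V} : v ∈ nbhd G S ↔ ∃ u ∈ S, G.Adj u v := by
  simp [nbhd]

theorem nbhd_mono {S T : Finset V} (h : S ⊆ T) : nbhd G S ⊆ nbhd G T :=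
  biUnion_subset_biUnion_of_subset_left _ h

theorem nbhd_union (S T : Finset V) : nbhd G (S ∪ T) = nbhd G S ∪ nbhd G T :=
  union_biUnion

theorem nbhd_sdiff_union_nbhd_subset (I J : Finset V) :
    nbhd G (J \ (I ∪ nbhd G I)) ⊆ nbhd G I ∪ (nbhd G J \ (I ∪ nbhd G I)) := by
  intro x hx
  obtain ⟨u, hu, hux⟩ := mem_nbhd.1 hx
  by_cases hxL : x ∈ I ∪ nbhd G I
  · refine mem_union_left _ ((mem_union.1 hxL).resolve_left fun hxI => ?_)
    exact (mem_sdiff.1 hu).2 (mem_union_right _ (mem_nbhd.2 ⟨x, hxI, hux.symm⟩))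
  · exact mem_union_right _ (mem_sdiff.2 ⟨nbhd_mono sdiff_subset hx, hxL⟩)

omit [Fintype V] [DecidableEq V] [DecidableRel G.Adj] in
theorem Indep.mono {S T : Finset V} (hS : Indep G S) (h : T ⊆ S) : Indep G T :=
  fun u hu v hv => hS u (h hu) v (h hv)

theorem Indep.disjoint_nbhd {S : Finset V} (hS : Indep G S) : Disjoint S (nbhd G S) :=
  disjoint_left.2 fun v hv hvN => by
    obtain ⟨u, hu, huv⟩ := mem_nbhd.1 hvN
    exact hS u hu v hv huv

theorem Indep.union {S T : Finset V} (hS : Indep G S) (hT : Indep G T)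
    (h : Disjoint T (nbhd G S)) : Indep G (S ∪ T) := by
  have cross : ∀ u ∈ S, ∀ v ∈ T, ¬ G.Adj u v := fun u hu v hv huv =>
    disjoint_left.1 h hv (mem_nbhd.2 ⟨u, hu, huv⟩)
  intro u hu v hv huv
  rcases mem_union.1 hu with hu | hu <;> rcases mem_union.1 hv with hv | hv
  exacts [hS u hu v hv huv, cross u hu v hv huv, cross v hv u hu huv.symm, hT u hu v hv huv]

end

omit [Fintype V] [DecidableEq V] [DecidableRel G.Adj] in
theorem exists_isMaxIndepOn (L : Finset V) : ∃ B, IsMaxIndepOn G L B := by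
  classical
  obtain ⟨B, hB, hBmax⟩ := exists_max_image (L.powerset.filter (Indep G)) card
    ⟨∅, mem_filter.2 ⟨empty_mem_powerset L, fun u hu => absurd hu (notMem_empty u)⟩⟩
  rw [mem_filter, mem_powerset] at hB
  exact ⟨B, hB.1, hB.2, fun T hTL hT => hBmax T (mem_filter.2 ⟨mem_powerset.2 hTL, hT⟩)⟩

def MatchesNbhdInto (I : Finset V) (f : V → V) : Prop :=
  Set.InjOn f (nbhd G I) ∧ ∀ t ∈ nbhd G I, f t ∈ I ∧ G.Adj t (f t)

section Matching

variable {G} {I Y : Finset V} {f : V → V}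

theorem MatchesNbhdInto.image_sdiff_subset (hf : MatchesNbhdInto G I f) (hY : Indep G Y)
    (hYL : Y ⊆ I ∪ nbhd G I) : (Y \ I).image f ⊆ I \ Y := by
  intro x hx
  obtain ⟨t, ht, rfl⟩ := mem_image.1 hx
  have htN : t ∈ nbhd G I := sdiff_le_iff.2 hYL ht
  exact mem_sdiff.2 ⟨(hf.2 t htN).1, fun hfY => hY t (mem_sdiff.1 ht).1 (f t) hfY (hf.2 t htN).2⟩

theorem MatchesNbhdInto.card_image_sdiff (hf : MatchesNbhdInto G I f) (hYL : Y ⊆ I ∪ nbhd G I) :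
    #((Y \ I).image f) = #(Y \ I) :=
  card_image_of_injOn (hf.1.mono (coe_subset.2 (sdiff_le_iff.2 hYL)))

theorem MatchesNbhdInto.card_le (hf : MatchesNbhdInto G I f) (hY : Indep G Y)
    (hYL : Y ⊆ I ∪ nbhd G I) : #Y ≤ #I := by
  rw [← card_sdiff_le_card_sdiff_iff, ← hf.card_image_sdiff hYL]
  exact card_le_card (hf.image_sdiff_subset hY hYL)

/-- When `|Y| = |I|`, the matching maps `Y \ I` onto `I \ Y`, so it cannot leave both ends of
an edge `t f(t)` outside `Y`. -/
theorem MatchesNbhdInto.mem_or_apply_mem (hf : MatchesNbhdInto G I f) (hY : Indep G Y)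
    (hYL : Y ⊆ I ∪ nbhd G I) (hcard : #Y = #I) {t : V} (ht : t ∈ nbhd G I) :
    t ∈ Y ∨ f t ∈ Y := by
  by_contra! h
  have himage : (Y \ I).image f = I \ Y := by
    refine eq_of_subset_of_card_le (hf.image_sdiff_subset hY hYL) ?_
    rw [hf.card_image_sdiff hYL, card_sdiff_comm hcard.symm]
  obtain ⟨s, hs, hst⟩ := mem_image.1 (himage ▸ mem_sdiff.2 ⟨(hf.2 t ht).1, h.2⟩)
  exact h.1 (hf.1 (sdiff_le_iff.2 hYL hs) ht hst ▸ (mem_sdiff.1 hs).1)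

theorem MatchesNbhdInto.diffOn_le (hf : MatchesNbhdInto G I f) (hI : Indep G I)
    (hYL : Y ⊆ I ∪ nbhd G I) : diffOn G (I ∪ nbhd G I) Y ≤ diffI G (Y ∩ I) := by
  have hmatched : (Y \ I).image f ⊆ nbhd G Y ∩ I := by
    intro x hx
    obtain ⟨t, ht, rfl⟩ := mem_image.1 hx
    have htN : t ∈ nbhd G I := sdiff_le_iff.2 hYL ht
    exact mem_inter.2 ⟨mem_nbhd.2 ⟨t, (mem_sdiff.1 ht).1, (hf.2 t htN).2⟩, (hf.2 t htN).1⟩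
  have hnbhd : nbhd G (Y ∩ I) ⊆ nbhd G Y ∩ nbhd G I :=
    subset_inter (nbhd_mono inter_subset_left) (nbhd_mono inter_subset_right)
  have hdisj : Disjoint ((Y \ I).image f) (nbhd G (Y ∩ I)) :=
    hI.disjoint_nbhd.mono (hmatched.trans inter_subset_right) (hnbhd.trans inter_subset_right)
  have hsub : (Y \ I).image f ∪ nbhd G (Y ∩ I) ⊆ nbhd G Y ∩ (I ∪ nbhd G I) := by
    rw [inter_union_distrib_left]
    exact union_subset_union hmatched hnbhd
  have hcard := card_le_card hsub
  rw [card_union_of_disjoint hdisj, hf.card_image_sdiff hYL] at hcard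
  have hsplit := card_sdiff_add_card_inter Y I
  simp only [diffOn, diffI]
  omega

end Matching

section Critical

variable {G} {I J Y : Finset V}

theorem IsCritIndep.card_le_card_nbhd_inter (hI : IsCritIndep G I) {T : Finset V}
    (hT : T ⊆ nbhd G I) : #T ≤ #(nbhd G T ∩ I) := by
  have hsub : nbhd G (I \ nbhd G T) ⊆ nbhd G I \ T := by
    intro x hx
    obtain ⟨u, hu, hux⟩ := mem_nbhd.1 hx
    refine mem_sdiff.2 ⟨nbhd_mono sdiff_subset hx, fun hxT => ?_⟩
    exact (mem_sdiff.1 hu).2 (mem_nbhd.2 ⟨x, hxT, hux.symm⟩)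
  have hcrit := hI.2 _ (hI.1.mono (sdiff_subset (t := nbhd G T)))
  have h1 := card_le_card hsub
  rw [card_sdiff_of_subset hT] at h1
  have h2 := card_sdiff_add_card_inter I (nbhd G T)
  have h3 := card_le_card hT
  rw [inter_comm]
  simp only [diffI] at hcrit
  omega

theorem IsCritIndep.exists_matchesNbhdInto (hI : IsCritIndep G I) :
    ∃ f, MatchesNbhdInto G I f := by
  obtain ⟨F, hFinj, hF⟩ := (all_card_le_biUnion_card_iff_exists_injective
    fun t : nbhd G I => G.neighborFinset t ∩ I).1 fun s => by
      have hs : s.biUnion (fun t : nbhd G I => G.neighborFinset t ∩ I) =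
          nbhd G (s.map (Function.Embedding.subtype _)) ∩ I := by
        rw [← biUnion_inter]
        congr 1
        ext
        simp [mem_nbhd]
      rw [hs, ← card_map (Function.Embedding.subtype _)]
      exact hI.card_le_card_nbhd_inter fun x hx => by
        obtain ⟨t, -, rfl⟩ := mem_map.1 hx
        exact t.2
  refine ⟨fun v => if hv : v ∈ nbhd G I then F ⟨v, hv⟩ else v, fun s hs t ht hst => ?_,
    fun t ht => ?_⟩
  · simp only [dif_pos (mem_coe.1 hs), dif_pos (mem_coe.1 ht)] at hst
    exact congrArg Subtype.val (hFinj hst)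
  · have := hF ⟨t, ht⟩
    simp only [mem_inter, SimpleGraph.mem_neighborFinset] at this
    simpa [dif_pos ht] using this.symm

theorem IsCritIndep.card_le (hI : IsCritIndep G I) (hY : Indep G Y) (hYL : Y ⊆ I ∪ nbhd G I) :
    #Y ≤ #I :=
  have ⟨_, hf⟩ := hI.exists_matchesNbhdInto
  hf.card_le hY hYL

theorem IsCritIndep.diffOn_le (hI : IsCritIndep G I) (hY : Indep G Y) (hYL : Y ⊆ I ∪ nbhd G I) :
    diffOn G (I ∪ nbhd G I) Y ≤ diffI G I :=
  have ⟨_, hf⟩ := hI.exists_matchesNbhdInto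
  (hf.diffOn_le hI.1 hYL).trans (hI.2 _ (hY.mono inter_subset_left))

theorem IsCritIndep.diffI_eq (hI : IsCritIndep G I) (hJ : IsCritIndep G J) :
    diffI G J = diffI G I :=
  le_antisymm (hI.2 J hJ.1) (hJ.2 I hI.1)

theorem IsCritIndep.card_nbhd_sdiff_le (hI : IsCritIndep G I) (hJ : IsCritIndep G J) :
    #(nbhd G J \ (I ∪ nbhd G I)) ≤ #(J \ (I ∪ nbhd G I)) := by
  have hin := hI.diffOn_le (Y := J ∩ (I ∪ nbhd G I)) (hJ.1.mono inter_subset_left)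
    inter_subset_right
  have hnbhd := card_le_card
    (inter_subset_inter_right (nbhd_mono (inter_subset_left (s₂ := I ∪ nbhd G I))) :
      nbhd G (J ∩ (I ∪ nbhd G I)) ∩ (I ∪ nbhd G I) ⊆ nbhd G J ∩ (I ∪ nbhd G I))
  have hJ' := card_inter_add_card_sdiff J (I ∪ nbhd G I)
  have hN := card_inter_add_card_sdiff (nbhd G J) (I ∪ nbhd G I)
  have hdiff := hI.diffI_eq hJ
  simp only [diffOn, diffI] at hin hdiff
  omega

end Critical

section MaxCritical

variable {G} {I J S B : Finset V}

theorem IsMaxCritIndep.card_eq (hI : IsMaxCritIndep G I) (hJ : IsMaxCritIndep G J) :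
    #J = #I :=
  le_antisymm (hI.2 J hJ.1) (hJ.2 I hI.1)

/-- `I ∪ (J \ L)` would be a critical independent set larger than `I`. -/
theorem IsMaxCritIndep.subset_union_nbhd (hI : IsMaxCritIndep G I) (hJ : IsCritIndep G J) :
    J ⊆ I ∪ nbhd G I := by
  have hJ₀ : Disjoint (J \ (I ∪ nbhd G I)) (I ∪ nbhd G I) := sdiff_disjoint
  have hnbhd : #(nbhd G (I ∪ J \ (I ∪ nbhd G I))) ≤ #(nbhd G I) + #(J \ (I ∪ nbhd G I)) := by
    rw [nbhd_union]
    refine (card_le_card (union_subset subset_union_left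
      (nbhd_sdiff_union_nbhd_subset I J))).trans ?_
    exact (card_union_le _ _).trans (by have := hI.1.card_nbhd_sdiff_le hJ; omega)
  have hcard : #(I ∪ J \ (I ∪ nbhd G I)) = #I + #(J \ (I ∪ nbhd G I)) :=
    card_union_of_disjoint (hJ₀.symm.mono_left subset_union_left)
  have hcrit : IsCritIndep G (I ∪ J \ (I ∪ nbhd G I)) := by
    refine ⟨hI.1.1.union (hJ.1.mono sdiff_subset) (hJ₀.mono_right subset_union_right),
      fun K hK => (hI.1.2 K hK).trans ?_⟩
    simp only [diffI]
    omega
  have := hI.2 _ hcrit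
  exact sdiff_eq_empty_iff_subset.1 (card_eq_zero.1 (by omega))

theorem IsMaxCritIndep.nbhd_subset_union_nbhd (hI : IsMaxCritIndep G I) (hJ : IsCritIndep G J) :
    nbhd G J ⊆ I ∪ nbhd G I := by
  have hin := hI.1.diffOn_le hJ.1 (hI.subset_union_nbhd hJ)
  have hdiff := hI.1.diffI_eq hJ
  simp only [diffOn, diffI] at hin hdiff
  exact inter_eq_left.1 (eq_of_subset_of_card_le inter_subset_left (by omega))

theorem isMaxCritIndep_of_subset_union_nbhd (hI : IsMaxCritIndep G I) (hJ : Indep G J)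
    (hJL : J ⊆ I ∪ nbhd G I) (hcard : #J = #I) (hN : nbhd G J ⊆ I ∪ nbhd G I) :
    IsMaxCritIndep G J := by
  have h := card_le_card (subset_sdiff.2 ⟨hN, hJ.disjoint_nbhd.symm⟩)
  rw [card_sdiff_of_subset hJL, card_union_of_disjoint hI.1.1.disjoint_nbhd] at h
  have hle : diffI G I ≤ diffI G J := by
    simp only [diffI]
    omega
  exact ⟨⟨hJ, fun K hK => (hI.1.2 K hK).trans hle⟩, fun K hK => (hI.2 K hK).trans hcard.ge⟩

theorem IsMaxCritIndep.isMaxIndep_union (hI : IsMaxCritIndep G I) (hJ : IsMaxCritIndep G J)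
    (hB : IsMaxIndepOn G (univ \ (I ∪ nbhd G I)) B) : IsMaxIndep G (J ∪ B) := by
  have hBL : Disjoint B (I ∪ nbhd G I) := sdiff_disjoint.mono_left hB.1
  refine ⟨hJ.1.1.union hB.2.1 (hBL.mono_right (hI.nbhd_subset_union_nbhd hJ.1)), fun T hT => ?_⟩
  rw [card_union_of_disjoint (hBL.symm.mono_left (hI.subset_union_nbhd hJ.1)), hI.card_eq hJ]
  have hin := hI.1.card_le (Y := T ∩ (I ∪ nbhd G I)) (hT.mono inter_subset_left)
    inter_subset_right
  have hout := hB.2.2 _ (sdiff_subset_sdiff (subset_univ T) le_rfl) (hT.mono sdiff_subset)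
  have := card_inter_add_card_sdiff T (I ∪ nbhd G I)
  omega

theorem IsMaxCritIndep.card_add_card_le (hI : IsMaxCritIndep G I)
    (hB : IsMaxIndepOn G (univ \ (I ∪ nbhd G I)) B) (hS : IsMaxIndep G S) : #I + #B ≤ #S := by
  have hBL : Disjoint I B := (sdiff_disjoint.mono_left hB.1).symm.mono_left subset_union_left
  simpa [card_union_of_disjoint hBL] using hS.2 _ (hI.isMaxIndep_union hI hB).1

theorem IsMaxCritIndep.card_inter_eq (hI : IsMaxCritIndep G I) (hS : IsMaxIndep G S) :
    #(S ∩ (I ∪ nbhd G I)) = #I := by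
  obtain ⟨B, hB⟩ := exists_isMaxIndepOn G (univ \ (I ∪ nbhd G I))
  have hout := hB.2.2 _ (sdiff_subset_sdiff (subset_univ S) le_rfl) (hS.1.mono sdiff_subset)
  have := hI.card_add_card_le hB hS
  have := card_inter_add_card_sdiff S (I ∪ nbhd G I)
  exact le_antisymm (hI.1.card_le (hS.1.mono inter_subset_left) inter_subset_right) (by omega)

theorem IsMaxCritIndep.isMaxIndepOn_sdiff (hI : IsMaxCritIndep G I) (hS : IsMaxIndep G S) :
    IsMaxIndepOn G (univ \ (I ∪ nbhd G I)) (S \ (I ∪ nbhd G I)) := by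
  obtain ⟨B, hB⟩ := exists_isMaxIndepOn G (univ \ (I ∪ nbhd G I))
  refine ⟨sdiff_subset_sdiff (subset_univ S) le_rfl, hS.1.mono sdiff_subset, fun T hT hTi => ?_⟩
  have := hB.2.2 T hT hTi
  have := hI.card_add_card_le hB hS
  have := hI.card_inter_eq hS
  have := card_inter_add_card_sdiff S (I ∪ nbhd G I)
  omega

theorem IsMaxCritIndep.coreOn_compl_eq_empty (hI : IsMaxCritIndep G I)
    (h : core G = nucleus G) : coreOn G (univ \ (I ∪ nbhd G I)) = ∅ := by
  refine Set.eq_empty_of_forall_notMem fun v hv => ?_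
  have hvcore : v ∈ core G := fun S hS => sdiff_subset (hv _ (hI.isMaxIndepOn_sdiff hS))
  obtain ⟨B, hB⟩ := exists_isMaxIndepOn G (univ \ (I ∪ nbhd G I))
  exact (mem_sdiff.1 (hB.1 (hv B hB))).2 (subset_union_left ((h ▸ hvcore : v ∈ nucleus G) I hI))

theorem IsMaxCritIndep.corona_inter_boundaryL_eq_empty (hI : IsMaxCritIndep G I)
    (h : core G = nucleus G) : corona G ∩ boundaryL G (I ∪ nbhd G I) = ∅ := by
  refine Set.eq_empty_of_forall_notMem ?_
  rintro v ⟨⟨S, hS, hvS⟩, hvL, w, hwL, hvw⟩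
  have hvN : v ∈ nbhd G I := (mem_union.1 hvL).resolve_left fun hvI =>
    hwL (mem_union_right _ (mem_nbhd.2 ⟨v, hvI, hvw⟩))
  obtain ⟨f, hf⟩ := hI.1.exists_matchesNbhdInto
  have hfv : f v ∈ nucleus G := fun J hJ =>
    (hf.mem_or_apply_mem hJ.1.1 (hI.subset_union_nbhd hJ.1) (hI.card_eq hJ) hvN).resolve_left
      fun hvJ => hwL (hI.nbhd_subset_union_nbhd hJ.1 (mem_nbhd.2 ⟨v, hvJ, hvw⟩))
  exact hS.1 v hvS (f v) ((h ▸ hfv : f v ∈ core G) S hS) (hf.2 v hvN).2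

theorem IsMaxCritIndep.core_subset_nucleus (hI : IsMaxCritIndep G I)
    (h : coreOn G (univ \ (I ∪ nbhd G I)) = ∅) : core G ⊆ nucleus G := by
  intro v hv J hJ
  obtain ⟨B, hB, hvB⟩ : ∃ B, IsMaxIndepOn G (univ \ (I ∪ nbhd G I)) B ∧ v ∉ B := by
    have hv : v ∉ coreOn G (univ \ (I ∪ nbhd G I)) := h ▸ Set.notMem_empty v
    simpa [coreOn] using hv
  exact (mem_union.1 (hv _ (hI.isMaxIndep_union hJ hB))).resolve_right hvB

theorem IsMaxCritIndep.nucleus_subset_core (hI : IsMaxCritIndep G I)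
    (h : corona G ∩ boundaryL G (I ∪ nbhd G I) = ∅) : nucleus G ⊆ core G := by
  intro v hv S hS
  have hN : nbhd G (S ∩ (I ∪ nbhd G I)) ⊆ I ∪ nbhd G I := by
    intro x hx
    by_contra hxL
    obtain ⟨u, hu, hux⟩ := mem_nbhd.1 hx
    have hu' : u ∈ corona G ∩ boundaryL G (I ∪ nbhd G I) :=
      ⟨⟨S, hS, (mem_inter.1 hu).1⟩, (mem_inter.1 hu).2, x, hxL, hux⟩
    exact h.subset hu'
  exact inter_subset_left (hv _ (isMaxCritIndep_of_subset_union_nbhd hI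
    (hS.1.mono inter_subset_left) inter_subset_right (hI.card_inter_eq hS) hN))

end MaxCritical

theorem stmt14 (I : Finset V) (hI : IsMaxCritIndep G I) :
    core G = nucleus G ↔
      (coreOn G (univ \ (I ∪ nbhd G I)) = ∅ ∧
        corona G ∩ boundaryL G (I ∪ nbhd G I) = ∅) :=
  ⟨fun h => ⟨hI.coreOn_compl_eq_empty h, hI.corona_inter_boundaryL_eq_empty h⟩,
    fun ⟨hcore, hcorona⟩ =>
      (hI.core_subset_nucleus hcore).antisymm (hI.nucleus_subset_core hcorona)⟩
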